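/- arXiv:2006.00400 — 7 statements merged into one kernel-verified Lean document; each statement's English description precedes it below -/
import Mathlib

section
/- For all n ≥ 2, the sum over k from 4 to 2^{n+1}−1 of b_k(q) equals 3 times the sum over k from 2 to 2^n−1 of b_k(q) plus 2(q−1) times the sum over k from 1 to 2^{n−1}−1 of b_k(q). -/
/-!
Write `S N = ∑_{1 ≤ k < N} b k`. By the recurrences, the block `b (4M) + ⋯ + b (4M + 3)` equals
`(1 + X) b M + 3 b (2M + 1) + X b (M + 1)`, and summing blocks gives, for `M ≥ 1`,
`S (4M) = 3 S (2M) + 2 (X - 1) S M + X b M`.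
At `M = 2^(n-1)` the correction term is `X b (2^(n-1)) = X`, which is exactly the discrepancy
`(b 1 + b 2 + b 3) - 3 b 1 = X` between the sums in the theorem and the sums `S`.
-/

open Polynomial Finset

section SternRecurrence

variable {b : ℕ → Polynomial ℤ}

theorem stern_b_two_pow (hb1 : b 1 = 1) (hb2 : ∀ n ≥ 1, b (2 * n) = b n) (j : ℕ) :
    b (2 ^ j) = 1 := by
  induction j with
  | zero => exact hb1
  | succ j ih => rw [pow_succ', hb2 _ Nat.one_le_two_pow, ih]

theorem stern_b_sum_Ico_one_four (hb1 : b 1 = 1) (hb2 : ∀ n ≥ 1, b (2 * n) = b n)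
    (hb43 : ∀ n : ℕ, b (4 * n + 3) = b (2 * n + 1) + X * b (2 * n + 2)) :
    ∑ k ∈ Ico 1 4, b k = 3 + X := by
  have h2 : b 2 = 1 := by rw [← hb1]; exact hb2 1 le_rfl
  have h3 : b 3 = 1 + X := by simpa [hb1, h2, mul_comm] using hb43 0
  simp only [sum_Ico_succ_top, Nat.one_le_ofNat, Nat.Ico_succ_singleton, sum_singleton, hb1, h2,
    h3]
  ring

theorem stern_b_block (hb2 : ∀ n ≥ 1, b (2 * n) = b n)
    (hb41 : ∀ n ≥ 1, b (4 * n + 1) = X * b (2 * n) + b (2 * n + 1))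
    (hb43 : ∀ n : ℕ, b (4 * n + 3) = b (2 * n + 1) + X * b (2 * n + 2))
    {M : ℕ} (hM : 1 ≤ M) :
    b (4 * M) + b (4 * M + 1) + b (4 * M + 2) + b (4 * M + 3)
      = (1 + X) * b M + 3 * b (2 * M + 1) + X * b (M + 1) := by
  have h0 : b (4 * M) = b M := by
    rw [show 4 * M = 2 * (2 * M) by ring, hb2 _ (by omega), hb2 _ hM]
  have h2 : b (4 * M + 2) = b (2 * M + 1) := by
    rw [show 4 * M + 2 = 2 * (2 * M + 1) by ring, hb2 _ (by omega)]
  have h3 : b (2 * M + 2) = b (M + 1) := by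
    rw [show 2 * M + 2 = 2 * (M + 1) by ring, hb2 _ (by omega)]
  rw [h0, hb41 M hM, hb2 M hM, h2, hb43 M, h3]
  ring

theorem stern_b_sum_Ico_four_mul (hb1 : b 1 = 1) (hb2 : ∀ n ≥ 1, b (2 * n) = b n)
    (hb41 : ∀ n ≥ 1, b (4 * n + 1) = X * b (2 * n) + b (2 * n + 1))
    (hb43 : ∀ n : ℕ, b (4 * n + 3) = b (2 * n + 1) + X * b (2 * n + 2))
    {M : ℕ} (hM : 1 ≤ M) :
    ∑ k ∈ Ico 1 (4 * M), b k
      = 3 * ∑ k ∈ Ico 1 (2 * M), b k + 2 * (X - 1) * ∑ k ∈ Ico 1 M, b k + X * b M := by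
  induction M, hM using Nat.le_induction with
  | base =>
    simp [sum_Ico_succ_top, hb1, ← stern_b_sum_Ico_one_four hb1 hb2 hb43]
  | succ M hM ih =>
    have hL : ∑ k ∈ Ico 1 (4 * (M + 1)), b k = ∑ k ∈ Ico 1 (4 * M), b k
        + (b (4 * M) + b (4 * M + 1) + b (4 * M + 2) + b (4 * M + 3)) := by
      rw [show 4 * (M + 1) = 4 * M + 3 + 1 by ring, sum_Ico_succ_top (by omega),
        sum_Ico_succ_top (by omega), sum_Ico_succ_top (by omega), sum_Ico_succ_top (by omega)]
      ring
    have hR : ∑ k ∈ Ico 1 (2 * (M + 1)), b k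
        = ∑ k ∈ Ico 1 (2 * M), b k + b M + b (2 * M + 1) := by
      rw [show 2 * (M + 1) = 2 * M + 1 + 1 by ring, sum_Ico_succ_top (by omega),
        sum_Ico_succ_top (by omega), hb2 M hM]
    rw [hL, hR, sum_Ico_succ_top hM, ih, stern_b_block hb2 hb41 hb43 hM]
    ring

end SternRecurrence

theorem stern_b_sum_recurrence (b : ℕ → Polynomial ℤ)
    (hb1 : b 1 = 1)
    (hb2 : ∀ n ≥ 1, b (2 * n) = b n)
    (hb41 : ∀ n ≥ 1, b (4 * n + 1) = X * b (2 * n) + b (2 * n + 1))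
    (hb43 : ∀ n : ℕ, b (4 * n + 3) = b (2 * n + 1) + X * b (2 * n + 2)) :
    ∀ n ≥ 2, ∑ k ∈ Finset.Icc 4 (2 ^ (n + 1) - 1), b k
      = 3 * ∑ k ∈ Finset.Icc 2 (2 ^ n - 1), b k
        + 2 * (X - 1) * ∑ k ∈ Finset.Icc 1 (2 ^ (n - 1) - 1), b k := by
  intro n hn
  obtain ⟨m, rfl⟩ : ∃ m, n = m + 1 := ⟨n - 1, by omega⟩
  have hpos (k : ℕ) : ¬IsMin (2 ^ k) := (Nat.two_pow_pos k).not_isMin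
  simp only [Icc_sub_one_right_eq_Ico_of_not_isMin (hpos _), Nat.add_sub_cancel]
  rw [show 2 ^ (m + 1 + 1) = 4 * 2 ^ m by ring, show 2 ^ (m + 1) = 2 * 2 ^ m by ring]
  have hM : 1 ≤ 2 ^ m := Nat.one_le_two_pow
  have key := stern_b_sum_Ico_four_mul hb1 hb2 hb41 hb43 hM
  rw [stern_b_two_pow hb1 hb2] at key
  generalize 2 ^ m = M at hM key ⊢
  rw [← sum_Ico_consecutive _ (by omega : 1 ≤ 4) (by omega : 4 ≤ 4 * M),
    stern_b_sum_Ico_one_four hb1 hb2 hb43, sum_eq_sum_Ico_succ_bot (by omega : 1 < 2 * M), hb1]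
    at key
  linear_combination key
end

section
/- For all n ≥ 2, L_{n+1}(q) = 3·L_n(q) + 2(q−1)·L_{n−1}(q). -/
open Polynomial Finset

/-!
Group the sum defining `L n` into the dyadic blocks `T m = ∑_{2^m ≤ k < 2^(m+1)} b k`.
Expanding `b (4k)`, …, `b (4k+3)` by the defining recurrences, and noting that
`b (2k+2) = b (k+1)` sums over a block to the block sum itself (the boundary terms
`b (2^m)` and `b (2^(m+1))` are both `1`), gives
`T (m+2) = 3 T (m+1) + 2 (q-1) T m`. The partial sums of `T` then satisfy the same recurrence
up to the constant `T 1 - 2 T 0 = q`, and this constant is exactly cancelled by the terms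
`b (2^n) = 1` in `L`.
-/

theorem Finset.sum_range_two_mul {M : Type*} [AddCommMonoid M] (f : ℕ → M) (n : ℕ) :
    ∑ j ∈ range (2 * n), f j = ∑ k ∈ range n, (f (2 * k) + f (2 * k + 1)) := by
  induction n with
  | zero => simp
  | succ n ih => rw [mul_add_one, sum_range_succ, sum_range_succ, ih, sum_range_succ, add_assoc]

theorem Finset.sum_Ico_two_mul {M : Type*} [AddCommMonoid M] (f : ℕ → M) (a b : ℕ) :
    ∑ j ∈ Ico (2 * a) (2 * b), f j = ∑ k ∈ Ico a b, (f (2 * k) + f (2 * k + 1)) := by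
  rw [sum_Ico_eq_sum_range, sum_Ico_eq_sum_range, ← Nat.mul_sub, sum_range_two_mul]
  simp only [mul_add, add_assoc]

theorem Finset.sum_range_add_two_of_recurrence {R : Type*} [CommRing R] {a c : R} {T : ℕ → R}
    (hT : ∀ m, T (m + 2) = a * T (m + 1) + c * T m) (m : ℕ) :
    ∑ j ∈ range (m + 2), T j
      = a * ∑ j ∈ range (m + 1), T j + c * ∑ j ∈ range m, T j + (T 0 + T 1 - a * T 0) := by
  induction m with
  | zero => simp only [sum_range_succ, sum_range_zero]; ring
  | succ m ih =>
    linear_combination sum_range_succ T (m + 2) + ih + hT m - a * sum_range_succ T (m + 1)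
      - c * sum_range_succ T m

namespace QStern

variable {R : Type*} [CommRing R] {b : ℕ → R}

def levelSum (b : ℕ → R) (m : ℕ) : R := ∑ k ∈ Ico (2 ^ m) (2 ^ (m + 1)), b k

theorem sum_Ico_one_two_pow (b : ℕ → R) (m : ℕ) :
    ∑ k ∈ Ico 1 (2 ^ m), b k = ∑ j ∈ range m, levelSum b j := by
  induction m with
  | zero => simp
  | succ m ih =>
    rw [sum_range_succ, ← ih, levelSum,
      sum_Ico_consecutive _ Nat.one_le_two_pow (Nat.pow_le_pow_right two_pos m.le_succ)]

theorem apply_two_pow (hb1 : b 1 = 1) (hb2 : ∀ n ≥ 1, b (2 * n) = b n) (m : ℕ) :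
    b (2 ^ m) = 1 := by
  induction m with
  | zero => exact hb1
  | succ m ih => rw [pow_succ', hb2 _ Nat.one_le_two_pow, ih]

theorem levelSum_succ (hb2 : ∀ n ≥ 1, b (2 * n) = b n) (m : ℕ) :
    levelSum b (m + 1) = levelSum b m + ∑ k ∈ Ico (2 ^ m) (2 ^ (m + 1)), b (2 * k + 1) := by
  rw [levelSum, pow_succ' _ (m + 1), pow_succ' _ m, sum_Ico_two_mul, ← pow_succ', sum_add_distrib,
    levelSum]
  congr 1
  refine sum_congr rfl fun k hk => hb2 k ?_
  exact Nat.one_le_two_pow.trans (mem_Ico.mp hk).1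

theorem sum_Ico_two_pow_apply_two_mul_add_two (hb1 : b 1 = 1) (hb2 : ∀ n ≥ 1, b (2 * n) = b n)
    (m : ℕ) : ∑ k ∈ Ico (2 ^ m) (2 ^ (m + 1)), b (2 * k + 2) = levelSum b m := by
  have hlt : 2 ^ m < 2 ^ (m + 1) := Nat.pow_lt_pow_right one_lt_two m.lt_succ_self
  calc ∑ k ∈ Ico (2 ^ m) (2 ^ (m + 1)), b (2 * k + 2)
      = ∑ k ∈ Ico (2 ^ m) (2 ^ (m + 1)), b (k + 1) :=
        sum_congr rfl fun k _ => hb2 (k + 1) k.succ_pos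
    _ = ∑ k ∈ Ico (2 ^ m + 1) (2 ^ (m + 1) + 1), b k := sum_Ico_add' b _ _ 1
    _ = levelSum b m := by
        rw [sum_Ico_succ_top (by omega), levelSum, sum_eq_sum_Ico_succ_bot hlt,
          apply_two_pow hb1 hb2, apply_two_pow hb1 hb2, add_comm]

theorem levelSum_add_two (x : R) (hb1 : b 1 = 1) (hb2 : ∀ n ≥ 1, b (2 * n) = b n)
    (hb41 : ∀ n ≥ 1, b (4 * n + 1) = x * b (2 * n) + b (2 * n + 1))
    (hb43 : ∀ n : ℕ, b (4 * n + 3) = b (2 * n + 1) + x * b (2 * n + 2)) (m : ℕ) :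
    levelSum b (m + 2) = 3 * levelSum b (m + 1) + 2 * (x - 1) * levelSum b m := by
  have hblock : levelSum b (m + 2) = ∑ k ∈ Ico (2 ^ m) (2 ^ (m + 1)),
      ((1 + x) * b k + 3 * b (2 * k + 1) + x * b (2 * k + 2)) := by
    rw [levelSum, pow_succ' _ (m + 2), pow_succ' _ (m + 1), sum_Ico_two_mul, pow_succ' _ m,
      sum_Ico_two_mul, ← pow_succ']
    refine sum_congr rfl fun k hk => ?_
    have hk : 1 ≤ k := Nat.one_le_two_pow.trans (mem_Ico.mp hk).1
    have h0 : b (2 * (2 * k)) = b k := by rw [hb2 _ (by omega), hb2 k hk]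
    have h1 : b (2 * (2 * k) + 1) = x * b k + b (2 * k + 1) := by
      rw [show 2 * (2 * k) + 1 = 4 * k + 1 by ring, hb41 k hk, hb2 k hk]
    have h2 : b (2 * (2 * k + 1)) = b (2 * k + 1) := hb2 _ (by omega)
    have h3 : b (2 * (2 * k + 1) + 1) = b (2 * k + 1) + x * b (2 * k + 2) := by
      rw [show 2 * (2 * k + 1) + 1 = 4 * k + 3 by ring, hb43]
    rw [h0, h1, h2, h3]
    ring
  have hT : ∑ k ∈ Ico (2 ^ m) (2 ^ (m + 1)), b k = levelSum b m := rfl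
  rw [hblock, sum_add_distrib, sum_add_distrib, ← mul_sum, ← mul_sum, ← mul_sum, hT,
    sum_Ico_two_pow_apply_two_mul_add_two hb1 hb2, levelSum_succ hb2]
  ring

theorem levelSum_zero (hb1 : b 1 = 1) : levelSum b 0 = 1 := by
  simp [levelSum, hb1]

theorem levelSum_one (x : R) (hb1 : b 1 = 1) (hb2 : ∀ n ≥ 1, b (2 * n) = b n)
    (hb43 : ∀ n : ℕ, b (4 * n + 3) = b (2 * n + 1) + x * b (2 * n + 2)) :
    levelSum b 1 = 2 + x := by
  have hb2' : b 2 = 1 := (hb2 1 le_rfl).trans hb1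
  have hb3 : b 3 = 1 + x := by simpa [hb1, hb2'] using hb43 0
  rw [levelSum, show Ico (2 ^ 1) (2 ^ 2) = {2, 3} by rfl, sum_pair (by norm_num), hb2', hb3]
  ring

theorem sum_range_levelSum_add_two (x : R) (hb1 : b 1 = 1) (hb2 : ∀ n ≥ 1, b (2 * n) = b n)
    (hb41 : ∀ n ≥ 1, b (4 * n + 1) = x * b (2 * n) + b (2 * n + 1))
    (hb43 : ∀ n : ℕ, b (4 * n + 3) = b (2 * n + 1) + x * b (2 * n + 2)) (m : ℕ) :
    ∑ j ∈ range (m + 2), levelSum b j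
      = 3 * ∑ j ∈ range (m + 1), levelSum b j + 2 * (x - 1) * ∑ j ∈ range m, levelSum b j + x := by
  rw [sum_range_add_two_of_recurrence (levelSum_add_two x hb1 hb2 hb41 hb43),
    levelSum_zero hb1, levelSum_one x hb1 hb2 hb43]
  ring

end QStern

theorem L_recurrence (b : ℕ → Polynomial ℤ) (L : ℕ → Polynomial ℤ)
    (hb1 : b 1 = 1)
    (hb2 : ∀ n ≥ 1, b (2 * n) = b n)
    (hb41 : ∀ n ≥ 1, b (4 * n + 1) = X * b (2 * n) + b (2 * n + 1))
    (hb43 : ∀ n : ℕ, b (4 * n + 3) = b (2 * n + 1) + X * b (2 * n + 2))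
    (hL : ∀ n ≥ 1, L n = 2 * (∑ k ∈ Finset.Icc 1 (2 ^ n - 1), b k) + b (2 ^ n)) :
    ∀ n ≥ 2, L (n + 1) = 3 * L n + 2 * (X - 1) * L (n - 1) := by
  have hL_levelSum (n : ℕ) (hn : 1 ≤ n) : L n = 2 * ∑ j ∈ range n, QStern.levelSum b j + 1 := by
    rw [hL n hn, Icc_sub_one_right_eq_Ico_of_not_isMin (by simp), QStern.sum_Ico_one_two_pow,
      QStern.apply_two_pow hb1 hb2]
  intro n hn
  obtain ⟨m, rfl⟩ : ∃ m, n = m + 2 := ⟨n - 2, by omega⟩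
  show L (m + 3) = 3 * L (m + 2) + 2 * (X - 1) * L (m + 1)
  rw [hL_levelSum (m + 3) (by omega), hL_levelSum (m + 2) (by omega),
    hL_levelSum (m + 1) (by omega), QStern.sum_range_levelSum_add_two X hb1 hb2 hb41 hb43 (m + 1)]
  ring
end

section
/- For every n ≥ 1, all complex roots of the polynomial L_n(q) are real; equivalently, L_n splits over ℝ. -/
open Polynomial Finset

/-! Substituting `q = 1 - 9 / (8 c²)` turns the recurrence of `Lₙ` into that of the Chebyshev
polynomials of the second kind: `(2c)ⁿ Lₙ(q) = 3ⁿ Uₙ(c)`. The `⌊n/2⌋` positive roots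
`cos (kπ/(n+1))` of `Uₙ` therefore give `⌊n/2⌋` distinct real roots of `Lₙ`, a nonzero polynomial
(`Lₙ(1) = 3ⁿ`) of degree at most `⌊n/2⌋`. -/

theorem eq_of_linear_recurrence_two {R : Type*} [Semiring R] (a b : R) {u v : ℕ → R}
    (hu : ∀ n, u (n + 2) = a * u (n + 1) + b * u n)
    (hv : ∀ n, v (n + 2) = a * v (n + 1) + b * v n)
    (h0 : u 0 = v 0) (h1 : u 1 = v 1) (n : ℕ) : u n = v n := by
  induction n using Nat.twoStepInduction with
  | zero => exact h0
  | one => exact h1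
  | more n ih₀ ih₁ => rw [hu, hv, ih₀, ih₁]

theorem Polynomial.splits_of_natDegree_le_card_subset_roots {R : Type*} [CommRing R] [IsDomain R]
    {p : R[X]} {Z : Finset R} (hZ : Z.val ⊆ p.roots) (hdeg : p.natDegree ≤ #Z) : p.Splits := by
  rw [splits_iff_card_roots]
  exact le_antisymm (card_roots' p)
    (hdeg.trans (Multiset.card_le_card (val_le_iff_val_subset.2 hZ)))

open Real in
theorem Polynomial.Chebyshev.div_two_le_card_pos_roots_U_real (n : ℕ) :
    n / 2 ≤ #{x ∈ (U ℝ n).roots.toFinset | 0 < x} := by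
  set root : ℕ → ℝ := fun k ↦ cos ((k + 1) * π / (n + 1))
  have hinj : Set.InjOn root (range (n / 2)) :=
    ((range n).nodup_map_iff_injOn.mp (roots_U_real_nodup n)).mono
      (by simpa using Nat.div_le_self n 2)
  calc n / 2 = #((range (n / 2)).image root) := by rw [card_image_of_injOn hinj, card_range]
    _ ≤ _ := card_le_card fun x hx ↦ by
      obtain ⟨k, hk, rfl⟩ := mem_image.mp hx
      have hk : 2 * (k + 1) < n + 1 := by have := mem_range.mp hk; omega
      refine mem_filter.mpr ⟨?_, cos_pos_of_mem_Ioo ⟨?_, ?_⟩⟩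
      · rw [Multiset.mem_toFinset, roots_U_real]
        exact mem_image_of_mem _ (mem_range.mpr (by omega))
      · have : (0:ℝ) < (k + 1) * π / (n + 1) := by positivity
        linarith [pi_pos]
      · rw [div_lt_iff₀ (by positivity)]
        have : (2 * (k + 1) : ℝ) < n + 1 := by exact_mod_cast hk
        nlinarith [pi_pos]

theorem eval_one_of_recurrence {L : ℕ → ℝ[X]} (hL1 : L 1 = 3) (hL2 : L 2 = 2 * X + 7)
    (hrec : ∀ n, L (n + 3) = 3 * L (n + 2) + 2 * (X - 1) * L (n + 1)) (n : ℕ) :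
    (L (n + 1)).eval 1 = 3 ^ (n + 1) :=
  eq_of_linear_recurrence_two (u := fun n ↦ (L (n + 1)).eval 1) (v := fun n ↦ 3 ^ (n + 1)) 3 0
    (fun n ↦ by simp [hrec]) (fun n ↦ by ring) (by simp [hL1]) (by norm_num [hL2]) n

theorem natDegree_le_of_recurrence {L : ℕ → ℝ[X]} (hL1 : L 1 = 3) (hL2 : L 2 = 2 * X + 7)
    (hrec : ∀ n, L (n + 3) = 3 * L (n + 2) + 2 * (X - 1) * L (n + 1)) (n : ℕ) :
    (L (n + 1)).natDegree ≤ (n + 1) / 2 := by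
  induction n using Nat.twoStepInduction with
  | zero => simp [hL1]
  | one => rw [hL2]; compute_degree!
  | more n ih₀ ih₁ =>
    rw [hrec]
    refine natDegree_add_le_of_degree_le ?_ ?_
    · exact (natDegree_mul_le_of_le ((natDegree_ofNat 3).le) ih₁).trans (by omega)
    · have : (2 * (X - 1) : ℝ[X]).natDegree ≤ 1 := by compute_degree
      exact (natDegree_mul_le_of_le this ih₀).trans (by omega)

open Chebyshev in
theorem eval_of_recurrence_eq_U {L : ℕ → ℝ[X]} (hL1 : L 1 = 3) (hL2 : L 2 = 2 * X + 7)
    (hrec : ∀ n, L (n + 3) = 3 * L (n + 2) + 2 * (X - 1) * L (n + 1)) {c : ℝ} (hc : c ≠ 0)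
    (n : ℕ) : (2 * c) ^ (n + 1) * (L (n + 1)).eval (1 - 9 / (8 * c ^ 2)) =
      3 ^ (n + 1) * (U ℝ (n + 1 : ℕ)).eval c := by
  have hq : 8 * c ^ 2 * (1 - 9 / (8 * c ^ 2) - 1) = -9 := by field_simp; ring
  refine eq_of_linear_recurrence_two
    (u := fun n ↦ (2 * c) ^ (n + 1) * (L (n + 1)).eval (1 - 9 / (8 * c ^ 2)))
    (v := fun n ↦ 3 ^ (n + 1) * (U ℝ (n + 1 : ℕ)).eval c) (6 * c) (-9)
    (fun n ↦ ?_) (fun n ↦ ?_) ?_ ?_ n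
  · simp only [hrec, eval_add, eval_mul, eval_ofNat, eval_sub, eval_X, eval_one]
    linear_combination (2 * c) ^ (n + 1) * (L (n + 1)).eval (1 - 9 / (8 * c ^ 2)) * hq
  · push_cast
    rw [show (n : ℤ) + 2 + 1 = n + 1 + 2 by ring, U_add_two,
      show (n : ℤ) + 1 + 1 = n + 2 by ring]
    simp only [eval_sub, eval_mul, eval_ofNat, eval_X]
    ring
  · simp [hL1]; ring
  · simp [hL2, U_two]; field_simp; ring

open Chebyshev in
theorem isRoot_of_recurrence_of_isRoot_U {L : ℕ → ℝ[X]} (hL1 : L 1 = 3) (hL2 : L 2 = 2 * X + 7)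
    (hrec : ∀ n, L (n + 3) = 3 * L (n + 2) + 2 * (X - 1) * L (n + 1)) {c : ℝ} (hc : c ≠ 0)
    {n : ℕ} (hroot : (U ℝ (n + 1 : ℕ)).IsRoot c) : (L (n + 1)).IsRoot (1 - 9 / (8 * c ^ 2)) := by
  have h := eval_of_recurrence_eq_U hL1 hL2 hrec hc n
  rw [hroot.eq_zero, mul_zero] at h
  exact (mul_eq_zero.mp h).resolve_left (pow_ne_zero _ (mul_ne_zero two_ne_zero hc))

theorem injOn_one_sub_div_sq : Set.InjOn (fun c : ℝ ↦ 1 - 9 / (8 * c ^ 2)) (Set.Ioi 0) :=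
  fun a (ha : 0 < a) b (hb : 0 < b) hab ↦ by
    have : a ^ 2 = b ^ 2 := by field_simp [ha.ne', hb.ne'] at hab; linarith
    exact (pow_left_inj₀ ha.le hb.le two_ne_zero).mp this

theorem L_real_rooted (L : ℕ → Polynomial ℝ)
    (hL1 : L 1 = 3)
    (hL2 : L 2 = 2 * X + 7)
    (hrec : ∀ n ≥ 2, L (n + 1) = 3 * L n + 2 * (X - 1) * L (n - 1)) :
    ∀ n ≥ 1, ((L n).map (RingHom.id ℝ)).Splits := by
  intro n hn
  obtain ⟨n, rfl⟩ : ∃ m, n = m + 1 := ⟨n - 1, by omega⟩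
  have hrec' : ∀ n, L (n + 3) = 3 * L (n + 2) + 2 * (X - 1) * L (n + 1) :=
    fun n ↦ hrec (n + 2) (by omega)
  have hL : L (n + 1) ≠ 0 := fun h ↦ pow_ne_zero (n + 1) (three_ne_zero (α := ℝ)) <| by
    rw [← eval_one_of_recurrence hL1 hL2 hrec' n, h, eval_zero]
  set P := {x ∈ (Chebyshev.U ℝ (n + 1 : ℕ)).roots.toFinset | 0 < x}
  set g : ℝ → ℝ := fun c ↦ 1 - 9 / (8 * c ^ 2)
  have hg : Set.InjOn g P := injOn_one_sub_div_sq.mono fun x hx ↦ (mem_filter.mp hx).2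
  rw [map_id]
  refine splits_of_natDegree_le_card_subset_roots (Z := P.image g) (fun x hx ↦ ?_) ?_
  · obtain ⟨c, hc, rfl⟩ := mem_image.mp hx
    obtain ⟨hc, hpos⟩ := mem_filter.mp hc
    rw [mem_roots hL]
    exact isRoot_of_recurrence_of_isRoot_U hL1 hL2 hrec' hpos.ne'
      (isRoot_of_mem_roots (Multiset.mem_toFinset.mp hc))
  · calc (L (n + 1)).natDegree ≤ (n + 1) / 2 := natDegree_le_of_recurrence hL1 hL2 hrec' n
      _ ≤ #P := Chebyshev.div_two_le_card_pos_roots_U_real (n + 1)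
      _ = #(P.image g) := (card_image_of_injOn hg).symm
end

section
/- Let {M_n(q)} be a sequence of real polynomials with M_0(q)=1, M_1(q)=t(q−r) for real constants t > 0 and r, and M_{n+1}(q) = a·M_n(q) + (bq+c)·M_{n−1}(q) for n ≥ 1, where a, b > 0, c ∈ ℝ, and r ≠ −c/b. Then for every n ≥ 1 the polynomial M_n(q) has only real zeros. -/
/-!
Fix `z` in the open upper half-plane and put `u n = M n (z)`, so that
`u (n + 2) = a u (n + 1) + v u n` with `v = b z + c`, `Im v > 0`. The ratios alternate between
half-planes: if `Im (u (n+1) / u n) > 0` then `u (n+2) / (v u (n+1)) = a / v + u n / u (n+1)` has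
negative imaginary part, and then `u (n+3) / u (n+2) = a + v u (n+1) / u (n+2)` has positive
imaginary part again. Hence no `u n` vanishes, so `M n` has no non-real zeros (non-real zeros come
in conjugate pairs).
-/

open Polynomial

namespace Complex

lemma ne_zero_of_im_ne_zero {z : ℂ} (h : z.im ≠ 0) : z ≠ 0 :=
  fun hz => h (by simp [hz])

lemma inv_im_neg_of_im_pos {z : ℂ} (hz : 0 < z.im) : z⁻¹.im < 0 := by
  rw [inv_im, neg_div, neg_lt_zero]
  exact div_pos hz (normSq_pos.2 (ne_zero_of_im_ne_zero hz.ne'))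

lemma inv_im_pos_of_im_neg {z : ℂ} (hz : z.im < 0) : 0 < z⁻¹.im := by
  have h := inv_im_neg_of_im_pos (z := -z) (by simpa using hz)
  simpa using h

end Complex

open Complex

section Recurrence

variable {a : ℝ} {v : ℂ} {u : ℕ → ℂ} {n : ℕ}

lemma im_div_mul_neg_of_im_div_pos (ha : 0 < a) (hv : 0 < v.im)
    (hrec : u (n + 2) = a * u (n + 1) + v * u n) (h : 0 < (u (n + 1) / u n).im) :
    (u (n + 2) / (v * u (n + 1))).im < 0 := by
  obtain ⟨hu₁, hu₀⟩ := div_ne_zero_iff.1 (ne_zero_of_im_ne_zero h.ne')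
  have hv₀ : v ≠ 0 := ne_zero_of_im_ne_zero hv.ne'
  have hsplit : u (n + 2) / (v * u (n + 1)) = a * v⁻¹ + (u (n + 1) / u n)⁻¹ := by
    rw [hrec]; field_simp
  rw [hsplit, add_im, im_ofReal_mul]
  exact add_neg (mul_neg_of_pos_of_neg ha (inv_im_neg_of_im_pos hv)) (inv_im_neg_of_im_pos h)

lemma im_div_pos_of_im_div_mul_neg (hrec : u (n + 2) = a * u (n + 1) + v * u n)
    (h : (u (n + 1) / (v * u n)).im < 0) : 0 < (u (n + 2) / u (n + 1)).im := by
  obtain ⟨hu₁, hvu₀⟩ := div_ne_zero_iff.1 (ne_zero_of_im_ne_zero h.ne)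
  have hsplit : u (n + 2) / u (n + 1) = a + (u (n + 1) / (v * u n))⁻¹ := by
    rw [hrec, inv_div]; field_simp
  rw [hsplit, add_im, ofReal_im, zero_add]
  exact inv_im_pos_of_im_neg h

theorem ne_zero_of_recurrence_of_im_pos (ha : 0 < a) (hv : 0 < v.im)
    (hrec : ∀ n, u (n + 2) = a * u (n + 1) + v * u n) (h₁ : 0 < (u 1 / u 0).im) (n : ℕ) :
    u n ≠ 0 := by
  have hodd : ∀ k, 0 < (u (2 * k + 1) / u (2 * k)).im := by
    intro k
    induction k with
    | zero => exact h₁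
    | succ k ih =>
      exact im_div_pos_of_im_div_mul_neg (hrec _)
        (im_div_mul_neg_of_im_div_pos ha hv (hrec _) ih)
  obtain ⟨k, rfl | rfl⟩ := Nat.even_or_odd' n
  · exact (div_ne_zero_iff.1 (ne_zero_of_im_ne_zero (hodd k).ne')).2
  · exact (div_ne_zero_iff.1 (ne_zero_of_im_ne_zero (hodd k).ne')).1

end Recurrence

theorem Polynomial.splits_of_aeval_ne_zero_of_im_pos {p : ℝ[X]}
    (h : ∀ z : ℂ, 0 < z.im → aeval z p ≠ 0) : p.Splits := by
  refine Splits.of_splits_map (algebraMap ℝ ℂ) (IsAlgClosed.splits _) fun z hz => ?_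
  have hroot : aeval z p = 0 := by
    rw [aeval_def, eval₂_eq_eval_map]
    exact (mem_roots'.1 hz).2
  have him : z.im = 0 := by
    rcases lt_trichotomy z.im 0 with hneg | hzero | hpos
    · refine absurd ?_ (h (starRingEnd ℂ z) (by simpa using hneg))
      rw [aeval_conj, hroot, map_zero]
    · exact hzero
    · exact absurd hroot (h z hpos)
  exact ⟨z.re, Complex.ext (by simp) (by simp [him])⟩

theorem type_zero_one_real_rooted_general (M : ℕ → Polynomial ℝ) (a b c t r : ℝ)
    (ht : 0 < t) (ha : 0 < a) (hb : 0 < b)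
    (hM0 : M 0 = 1) (hM1 : M 1 = C t * (X - C r))
    (hrec : ∀ n ≥ 1, M (n + 1) = C a * M n + (C b * X + C c) * M (n - 1)) :
    ∀ n ≥ 1, (M n).Splits := by
  intro n _
  refine splits_of_aeval_ne_zero_of_im_pos fun z hz => ?_
  refine ne_zero_of_recurrence_of_im_pos (u := fun n => aeval z (M n)) (v := b * z + c) ha ?_
    (fun n => ?_) ?_ n
  · simpa using mul_pos hb hz
  · simp [hrec (n + 1) (by omega)]
  · simpa [hM0, hM1] using mul_pos ht hz

theorem type_zero_one_real_rooted (M : ℕ → Polynomial ℝ) (a b c t r : ℝ)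
    (ht : 0 < t) (ha : 0 < a) (hb : 0 < b) (hr : r ≠ -c / b)
    (hM0 : M 0 = 1) (hM1 : M 1 = C t * (X - C r))
    (hrec : ∀ n ≥ 1, M (n + 1) = C a * M n + (C b * X + C c) * M (n - 1)) :
    ∀ n ≥ 1, (M n).Splits :=
  type_zero_one_real_rooted_general M a b c t r ht ha hb hM0 hM1 hrec
end

section
/- For every n ≥ 1, the polynomial L_{2n}(q) divides the polynomial L_{4n+1}(q) in ℝ[q]. -/
open Polynomial

private noncomputable def G : ℕ → Polynomial ℝ
  | 0 => 0
  | 1 => 1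
  | (n+2) => 3 * G (n+1) + 2 * (X - 1) * G n

private lemma G_add (m : ℕ) : ∀ k, G (m + k + 1) = G (m+1) * G (k+1) + 2*(X-1) * G m * G k := by
  intro k
  induction k using Nat.twoStepInduction with
  | zero => simp [G]
  | one =>
    show G (m + 2) = _
    rw [show m + 2 = (m) + 2 from rfl]
    simp only [G]; ring
  | more k ih1 ih2 =>
    have h : m + (k + 2) + 1 = (m + k + 1) + 2 := by ring
    rw [h, show G ((m+k+1)+2) = 3 * G (m+k+1+1) + 2 * (X - 1) * G (m+k+1) from rfl]
    rw [show m + k + 1 + 1 = m + (k+1) + 1 from by ring, ih2, ih1]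
    rw [show k + 2 + 1 = (k+1) + 2 from rfl, show k + 2 = k + 2 from rfl]
    simp only [G]; ring

private lemma G_dvd (m : ℕ) (hm : 1 ≤ m) : G m ∣ G (2 * m) := by
  obtain ⟨j, rfl⟩ := Nat.exists_eq_add_of_le hm
  have h : 2 * (1 + j) = (1 + j) + j + 1 := by ring
  rw [h, G_add]
  exact ⟨G (1 + j + 1) + 2*(X-1)*G j, by rw [show j + 1 = 1 + j from by ring]; ring⟩

theorem L_divisibility (L : ℕ → Polynomial ℝ)
    (hL1 : L 1 = 3)
    (hL2 : L 2 = 2 * X + 7)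
    (hrec : ∀ n ≥ 2, L (n + 1) = 3 * L n + 2 * (X - 1) * L (n - 1)) :
    ∀ n ≥ 1, L (2 * n) ∣ L (4 * n + 1) := by
  have hLG : ∀ n, L (n + 1) = G (n + 2) := by
    intro n
    induction n using Nat.twoStepInduction with
    | zero => simpa [G] using hL1
    | one =>
      rw [hL2, show G 3 = 3 * G 2 + 2 * (X-1) * G 1 from rfl]
      simp [G]; ring
    | more k ih1 ih2 =>
      have h := hrec (k + 2) (by omega)
      rw [show k + 2 - 1 = k + 1 from rfl] at h
      rw [show k + 2 + 1 = k + 3 from rfl] at h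
      rw [h, ih1, ih2]
      rw [show k + 2 + 2 = (k+2) + 2 from rfl]
      simp only [G]
  intro n hn
  have h1 : L (2 * n) = G (2 * n + 1) := by
    have := hLG (2 * n - 1); rwa [show 2*n-1+1 = 2*n from by omega, show 2*n-1+2 = 2*n+1 from by omega] at this
  have h2 : L (4 * n + 1) = G (4 * n + 2) := hLG (4 * n)
  rw [h1, h2, show 4 * n + 2 = 2 * (2 * n + 1) from by ring]
  exact G_dvd _ (by omega)
end

section
/- For every k ≥ 0, the 2×2 Hankel determinant L_{k+1}(q)·L_{k+3}(q) − L_{k+2}(q)² equals (−1)^{k+1}·2^{k+2}·(q−1)^{k+2}. -/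
open Polynomial

theorem L_hankel_2 (L : ℕ → Polynomial ℝ)
    (hL1 : L 1 = 3)
    (hL2 : L 2 = 2 * X + 7)
    (hrec : ∀ n ≥ 2, L (n + 1) = 3 * L n + 2 * (X - 1) * L (n - 1)) :
    ∀ k : ℕ, L (k + 1) * L (k + 3) - L (k + 2) ^ 2
      = (-1) ^ (k + 1) * 2 ^ (k + 2) * (X - 1) ^ (k + 2) := by
  intro k
  induction k with
  | zero =>
    have h3 := hrec 2 (by norm_num)
    norm_num at h3
    rw [h3, hL1, hL2]; ring
  | succ k ih =>
    have h := hrec (k + 3) (by omega)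
    have h2 := hrec (k + 2) (by omega)
    simp only [show k + 3 - 1 = k + 2 from rfl, show k + 2 - 1 = k + 1 from rfl] at h h2
    show L (k + 2) * L (k + 4) - L (k + 3) ^ 2 = _
    linear_combination (L (k + 2)) * h - (L (k + 3)) * h2 - 2 * (X - 1 : Polynomial ℝ) * ih
end

section
/- For every n ≥ 2, the derivative of L_n evaluated at q = 1 equals 2(n−1)·3^{n−2}. -/
open Polynomial

theorem L_deriv_eval_one (L : ℕ → Polynomial ℝ)
    (hL1 : L 1 = 3)
    (hL2 : L 2 = 2 * X + 7)
    (hrec : ∀ n ≥ 2, L (n + 1) = 3 * L n + 2 * (X - 1) * L (n - 1)) :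
    ∀ n ≥ 2, (Polynomial.derivative (L n)).eval 1 = 2 * ((n : ℝ) - 1) * 3 ^ (n - 2) := by
  have heval : ∀ n : ℕ, (L (n+1)).eval 1 = 3^(n+1) ∧ (L (n+2)).eval 1 = 3^(n+2) := by
    intro n
    induction n with
    | zero => constructor <;> simp [hL1, hL2] <;> norm_num
    | succ m ih =>
      refine ⟨ih.2, ?_⟩
      have h := hrec (m+2) (by omega)
      have : m + 2 - 1 = m + 1 := by omega
      rw [this] at h
      rw [show m + 1 + 2 = m + 2 + 1 by ring, h]
      simp [ih.1, ih.2]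
      ring
  have hder : ∀ n : ℕ, (Polynomial.derivative (L (n+2))).eval 1
      = 2 * ((n : ℝ) + 1) * 3 ^ n := by
    intro n
    induction n with
    | zero => simp [hL2]
    | succ m ih =>
      have h := hrec (m+2) (by omega)
      have h12 : m + 2 - 1 = m + 1 := by omega
      rw [h12] at h
      rw [show m + 1 + 2 = m + 2 + 1 by ring, h]
      simp [derivative_mul, ih, (heval m).1]
      push_cast
      ring
  intro n hn
  obtain ⟨m, rfl⟩ : ∃ m, n = m + 2 := ⟨n - 2, by omega⟩
  rw [hder m]
  have : m + 2 - 2 = m := by omega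
  rw [this]
  push_cast
  ring
end
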